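/- arXiv:2304.05908 — 2 statements merged into one kernel-verified Lean document; each statement's English description precedes it below -/
import Mathlib

section
/- Let G be the complete graph on q ≥ 2 vertices with pairwise distinct positive edge weights, and let T be its (unique) maximum spanning tree. Then an edge weight w_ij is a jump point of the zeroth Betti curve ε ↦ β₀(ε) (i.e., a birth value of a connected component in the graph filtration) if and only if the edge {i,j} belongs to T. Consequently the birth set B has exactly q − 1 elements. -/
/-!
The Betti-0 curve is locally constant away from the edge weights, and just below a weight `ε` it
counts the components of `G_ε` with the edges of weight exactly `ε` added. With distinct weights
that is a single edge `{i, j}`, so `w s(i, j)` is a jump point iff `i` and `j` are not joined by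
heavier edges, i.e. iff the greedy (Kruskal) algorithm run in order of decreasing weight accepts
`{i, j}`. The accepted edges form an acyclic graph, since the lightest edge of a cycle has its
endpoints joined by the rest of the cycle. By the exchange argument it contains every maximum
spanning tree, so by maximality of trees among acyclic graphs it is `T`, with `q - 1` edges.
-/

/-- The threshold graph of a weighted graph `H`: keep only edges of `H` whose
weight strictly exceeds `ε`. -/
def thresholdOf {q : ℕ} (H : SimpleGraph (Fin q)) (w : Sym2 (Fin q) → ℝ) (ε : ℝ) :
    SimpleGraph (Fin q) where
  Adj i j := H.Adj i j ∧ ε < w s(i, j)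
  symm := ⟨fun i j h => ⟨h.1.symm, by rw [Sym2.eq_swap]; exact h.2⟩⟩
  loopless := ⟨fun i h => H.loopless.irrefl i h.1⟩

/-- The threshold graph of the complete weighted graph on `Fin q`. -/
def thresholdGraph {q : ℕ} (w : Sym2 (Fin q) → ℝ) (ε : ℝ) : SimpleGraph (Fin q) :=
  thresholdOf ⊤ w ε

/-- `β₀(ε)`: the number of connected components of the threshold graph. -/
noncomputable def betti0 {q : ℕ} (w : Sym2 (Fin q) → ℝ) (ε : ℝ) : ℕ :=
  Nat.card (thresholdGraph w ε).ConnectedComponent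

/-- `E(ε)`: the number of edges of the threshold graph. -/
noncomputable def numEdges {q : ℕ} (w : Sym2 (Fin q) → ℝ) (ε : ℝ) : ℕ :=
  (thresholdGraph w ε).edgeSet.ncard

/-- `β₁(ε) = E(ε) − q + β₀(ε)`: the cycle rank of the threshold graph. -/
noncomputable def betti1 {q : ℕ} (w : Sym2 (Fin q) → ℝ) (ε : ℝ) : ℤ :=
  (numEdges w ε : ℤ) - (q : ℤ) + (betti0 w ε : ℤ)

/-- A point `ε` is a jump point of `f` if `f` is not constant on any
neighborhood of `ε`. -/
def IsJump {β : Type*} (f : ℝ → β) (ε : ℝ) : Prop :=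
  ∀ δ > 0, ∃ x : ℝ, |x - ε| < δ ∧ f x ≠ f ε

/-- `T` is a maximum spanning tree of `G` w.r.t. the weights `w`: a spanning tree
of `G` whose total edge weight is maximal among all spanning trees of `G`. -/
def IsMaxSpanningTree {V : Type*} (G : SimpleGraph V) (w : Sym2 V → ℝ)
    (T : SimpleGraph V) : Prop :=
  T ≤ G ∧ T.IsTree ∧
    ∀ T' : SimpleGraph V, T' ≤ G → T'.IsTree →
      (∑ᶠ e ∈ T'.edgeSet, w e) ≤ ∑ᶠ e ∈ T.edgeSet, w e

open SimpleGraph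

namespace SimpleGraph

variable {V : Type*} {G H : SimpleGraph V}

theorem Reachable.of_forall_adj_reachable (h : ∀ ⦃a b⦄, H.Adj a b → G.Reachable a b) {u v : V}
    (huv : H.Reachable u v) : G.Reachable u v := by
  obtain ⟨p⟩ := huv
  induction p with
  | nil => rfl
  | cons hadj _ ih => exact (h hadj).trans ih

theorem card_connectedComponent_eq_iff_of_le [Finite V] (hGH : G ≤ H) :
    Nat.card H.ConnectedComponent = Nat.card G.ConnectedComponent ↔
      ∀ ⦃u v⦄, H.Adj u v → G.Reachable u v := by
  have hsurj := ConnectedComponent.surjective_map_ofLE hGH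
  have hinj_iff : Function.Injective (ConnectedComponent.map (Hom.ofLE hGH)) ↔
      ∀ ⦃u v⦄, H.Adj u v → G.Reachable u v := by
    refine ⟨fun hinj u v huv => ConnectedComponent.exact (hinj ?_), fun h => ?_⟩
    · simpa using ConnectedComponent.sound huv.reachable
    · refine ConnectedComponent.ind₂ fun u v huv => ConnectedComponent.sound ?_
      simp only [ConnectedComponent.map_mk, Hom.coe_ofLE, id_eq, ConnectedComponent.eq] at huv
      exact huv.of_forall_adj_reachable h
  rw [← hinj_iff]
  refine ⟨fun hcard => (hsurj.bijective_of_nat_card_le hcard.ge).1, fun hinj => ?_⟩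
  exact (Nat.card_congr (Equiv.ofBijective _ ⟨hinj, hsurj⟩)).symm

theorem card_connectedComponent_sup_edge_eq_iff [Finite V] {u v : V} :
    Nat.card (G ⊔ edge u v).ConnectedComponent = Nat.card G.ConnectedComponent ↔
      G.Reachable u v := by
  rw [card_connectedComponent_eq_iff_of_le le_sup_left]
  refine ⟨fun h => ?_, fun h a b hab => ?_⟩
  · obtain rfl | huv := eq_or_ne u v
    · rfl
    · exact h (Or.inr ((edge_adj _ _ _ _).mpr ⟨Or.inl ⟨rfl, rfl⟩, huv⟩))
  · rcases hab with hab | hab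
    · exact hab.reachable
    · obtain ⟨⟨rfl, rfl⟩ | ⟨rfl, rfl⟩, -⟩ := (edge_adj _ _ _ _).mp hab
      exacts [h, h.symm]

theorem isTree_of_isAcyclic_of_card [Finite V] [Nonempty V] (hG : G.IsAcyclic)
    (hcard : Nat.card G.edgeSet + 1 = Nat.card V) : G.IsTree := by
  obtain ⟨F, hGF, -, hF⟩ := connected_top.exists_isTree_le_of_le_of_isAcyclic le_top hG
  have hFcard := (isTree_iff_connected_and_card.mp hF).2
  rw [Nat.card_coe_set_eq] at hcard hFcard
  have hedges : G.edgeSet = F.edgeSet :=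
    Set.eq_of_subset_of_ncard_le (edgeSet_mono hGF) (by omega)
  rwa [edgeSet_inj.mp hedges]

end SimpleGraph

theorem IsMaxSpanningTree.weight_le_of_exchange {V : Type*} [Finite V] {w : Sym2 V → ℝ}
    {T : SimpleGraph V} (hT : IsMaxSpanningTree ⊤ w T) {e : Sym2 V} (he : e ∈ T.edgeSet)
    {a b : V} (hab : a ≠ b) (hnadj : ¬ T.Adj a b)
    (hacyc : (T.deleteEdges {e} ⊔ edge a b).IsAcyclic) : w s(a, b) ≤ w e := by
  obtain ⟨-, htree, hmax⟩ := hT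
  have hnew : s(a, b) ∉ T.edgeSet \ {e} := fun h => hnadj h.1
  have hedges : (T.deleteEdges {e} ⊔ edge a b).edgeSet = insert s(a, b) (T.edgeSet \ {e}) := by
    rw [edgeSet_sup, edgeSet_deleteEdges, edgeSet_edge_of_ne hab, Set.union_singleton]
  have hT' : (T.deleteEdges {e} ⊔ edge a b).IsTree := by
    have := htree.connected.nonempty
    refine isTree_of_isAcyclic_of_card hacyc ?_
    rw [← (isTree_iff_connected_and_card.mp htree).2, Nat.card_coe_set_eq, Nat.card_coe_set_eq,
      hedges, Set.ncard_insert_of_notMem hnew, Set.ncard_sdiff_singleton_add_one he]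
  have hsum := hmax _ le_top hT'
  rw [hedges, finsum_mem_insert w hnew (Set.toFinite _),
    ← Set.insert_eq_of_mem he, ← Set.insert_sdiff_singleton,
    finsum_mem_insert w (fun h => h.2 rfl) (Set.toFinite _)] at hsum
  simpa using hsum

open Filter Topology

theorem isJump_iff_not_eventually_eq {β : Type*} (f : ℝ → β) (ε : ℝ) :
    IsJump f ε ↔ ¬ ∀ᶠ x in 𝓝 ε, f x = f ε := by
  simp only [IsJump, Metric.eventually_nhds_iff, Real.dist_eq, not_exists, not_and, not_forall,
    exists_prop, ne_eq]

section Threshold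

variable {q : ℕ} (w : Sym2 (Fin q) → ℝ)

@[simp]
theorem thresholdGraph_adj {ε : ℝ} {a b : Fin q} :
    (thresholdGraph w ε).Adj a b ↔ a ≠ b ∧ ε < w s(a, b) := by
  simp [thresholdGraph, thresholdOf]

theorem mem_edgeSet_thresholdGraph {ε : ℝ} {e : Sym2 (Fin q)} :
    e ∈ (thresholdGraph w ε).edgeSet ↔ ¬ e.IsDiag ∧ ε < w e := by
  induction e using Sym2.ind with
  | h a b => simp

theorem eventually_nhdsGE_thresholdGraph_eq (ε : ℝ) :
    ∀ᶠ x in 𝓝[≥] ε, thresholdGraph w x = thresholdGraph w ε := by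
  have hedges : ∀ᶠ x in 𝓝[≥] ε, ∀ e, ε < w e → x < w e :=
    eventually_all.mpr fun e => eventually_imp_distrib_left.mpr fun he =>
      nhdsWithin_le_nhds (eventually_lt_nhds he)
  filter_upwards [hedges, self_mem_nhdsWithin] with x hx (hεx : ε ≤ x)
  ext a b
  simp only [thresholdGraph_adj]
  exact and_congr_right fun _ => ⟨hεx.trans_lt, hx _⟩

theorem eventually_nhdsLT_thresholdGraph_eq (ε : ℝ) :
    ∀ᶠ x in 𝓝[<] ε, thresholdGraph w x = thresholdGraph w ε ⊔ fromEdgeSet (w ⁻¹' {ε}) := by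
  have hedges : ∀ᶠ x in 𝓝[<] ε, ∀ e, w e < ε → w e < x :=
    eventually_all.mpr fun e => eventually_imp_distrib_left.mpr fun he =>
      nhdsWithin_le_nhds (eventually_gt_nhds he)
  filter_upwards [hedges, self_mem_nhdsWithin] with x hx (hxε : x < ε)
  ext a b
  simp only [thresholdGraph_adj, sup_adj, fromEdgeSet_adj, Set.mem_preimage,
    Set.mem_singleton_iff]
  constructor
  · rintro ⟨hab, hxw⟩
    rcases lt_trichotomy ε (w s(a, b)) with h | h | h
    exacts [Or.inl ⟨hab, h⟩, Or.inr ⟨h.symm, hab⟩, absurd (hx _ h) hxw.not_gt]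
  · rintro (⟨hab, h⟩ | ⟨h, hab⟩)
    exacts [⟨hab, hxε.trans h⟩, ⟨hab, h ▸ hxε⟩]

theorem isJump_betti0_iff (ε : ℝ) :
    IsJump (betti0 w) ε ↔
      Nat.card (thresholdGraph w ε ⊔ fromEdgeSet (w ⁻¹' {ε})).ConnectedComponent ≠ betti0 w ε := by
  have hright : ∀ᶠ x in 𝓝[≥] ε, betti0 w x = betti0 w ε := by
    filter_upwards [eventually_nhdsGE_thresholdGraph_eq w ε] with x hx
    rw [betti0, hx, betti0]
  have hleft : ∀ᶠ x in 𝓝[<] ε, betti0 w x =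
      Nat.card (thresholdGraph w ε ⊔ fromEdgeSet (w ⁻¹' {ε})).ConnectedComponent := by
    filter_upwards [eventually_nhdsLT_thresholdGraph_eq w ε] with x hx
    rw [betti0, hx]
  rw [isJump_iff_not_eventually_eq, ← nhdsLT_sup_nhdsGE, eventually_sup,
    and_iff_left hright, not_iff_not]
  refine ⟨fun h => ?_, fun h => hleft.mono fun x hx => hx.trans h⟩
  obtain ⟨x, hx, hx'⟩ := (hleft.and h).exists
  exact hx.symm.trans hx'

theorem not_isJump_betti0_of_forall_ne {ε : ℝ} (h : ∀ e : Sym2 (Fin q), ¬ e.IsDiag → w e ≠ ε) :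
    ¬ IsJump (betti0 w) ε := by
  have hbot : fromEdgeSet (w ⁻¹' {ε}) = ⊥ := by
    ext a b
    simp only [fromEdgeSet_adj, Set.mem_preimage, Set.mem_singleton_iff, bot_adj, iff_false,
      not_and]
    exact fun hw hab => h _ (by simpa using hab) hw
  rw [isJump_betti0_iff, hbot, sup_bot_eq, betti0, not_not]

theorem isJump_betti0_weight_iff
    (hinj : ∀ e f : Sym2 (Fin q), ¬ e.IsDiag → ¬ f.IsDiag → w e = w f → e = f)
    {i j : Fin q} (hij : i ≠ j) :
    IsJump (betti0 w) (w s(i, j)) ↔ ¬ (thresholdGraph w (w s(i, j))).Reachable i j := by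
  have hlevel : fromEdgeSet (w ⁻¹' {w s(i, j)}) = edge i j := by
    ext a b
    simp only [fromEdgeSet_adj, Set.mem_preimage, Set.mem_singleton_iff, edge_adj]
    refine ⟨fun ⟨hw, hab⟩ => ⟨?_, hab⟩, fun ⟨h, hab⟩ => ⟨?_, hab⟩⟩
    · simpa using hinj _ _ (by simpa using hab) (by simpa using hij) hw
    · rcases h with ⟨rfl, rfl⟩ | ⟨rfl, rfl⟩
      exacts [rfl, Sym2.eq_swap ▸ rfl]
  rw [isJump_betti0_iff, hlevel, Ne, betti0, card_connectedComponent_sup_edge_eq_iff]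

def kruskalGraph : SimpleGraph (Fin q) where
  Adj i j := i ≠ j ∧ ¬ (thresholdGraph w (w s(i, j))).Reachable i j
  symm := ⟨fun i j h => ⟨h.1.symm, by rw [Sym2.eq_swap, reachable_comm]; exact h.2⟩⟩
  loopless := ⟨fun i h => h.1 rfl⟩

theorem isAcyclic_kruskalGraph
    (hinj : ∀ e f : Sym2 (Fin q), ¬ e.IsDiag → ¬ f.IsDiag → w e = w f → e = f) :
    (kruskalGraph w).IsAcyclic := by
  intro u c hc
  obtain ⟨e, he, hmin⟩ := c.edges.toFinset.exists_min_image w <|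
    List.toFinset_nonempty_iff _ |>.mpr (Walk.edges_eq_nil.not.mpr hc.not_nil)
  rw [List.mem_toFinset] at he
  induction e using Sym2.ind with
  | h a b =>
  obtain ⟨hab, hnr⟩ := c.adj_of_mem_edges he
  set H := thresholdGraph w (w s(a, b)) ⊔ edge a b
  have hsub : ∀ f ∈ c.edges, f ∈ H.edgeSet := by
    intro f hf
    rw [edgeSet_sup, edgeSet_edge_of_ne hab, Set.mem_union, Set.mem_singleton_iff,
      mem_edgeSet_thresholdGraph]
    by_cases hfe : f = s(a, b)
    · exact Or.inr hfe
    have hfd := (kruskalGraph w).not_isDiag_of_mem_edgeSet (c.edges_subset_edgeSet hf)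
    refine Or.inl ⟨hfd, (hmin f (List.mem_toFinset.mpr hf)).lt_of_ne fun hw => hfe ?_⟩
    exact (hinj _ _ (by simpa using hab) hfd hw).symm
  have hreach := (adj_and_reachable_delete_edges_iff_exists_cycle.mpr
    ⟨u, c.transfer H hsub, hc.transfer hsub, by rwa [Walk.edges_transfer]⟩).2
  refine hnr (hreach.mono fun x y hxy => ?_)
  obtain ⟨hxy | hxy, hne⟩ := deleteEdges_adj.mp hxy
  · exact hxy
  · exact absurd (edgeSet_edge_subset hxy) hne

theorem IsMaxSpanningTree.le_kruskalGraph {T : SimpleGraph (Fin q)}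
    (hT : IsMaxSpanningTree ⊤ w T) : T ≤ kruskalGraph w := by
  intro i j hij
  refine ⟨hij.ne, fun ⟨p⟩ => ?_⟩
  set T₀ := T.deleteEdges {s(i, j)}
  have hbridge : ¬ T₀.Reachable i j :=
    isBridge_iff.mp (isAcyclic_iff_forall_isBridge.mp hT.2.1.isAcyclic hij)
  obtain ⟨⟨⟨a, b⟩, hab⟩, -, ha, hb⟩ :=
    p.exists_boundary_dart {v | T₀.Reachable i v} Reachable.rfl hbridge
  obtain ⟨hne, hw⟩ := (thresholdGraph_adj w).mp hab
  have hnr : ¬ T₀.Reachable a b := fun h => hb (Reachable.trans ha h)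
  have hnadj : ¬ T.Adj a b := fun h => hnr <| Adj.reachable <| deleteEdges_adj.mpr
    ⟨h, fun he => hw.ne (congrArg w (Set.mem_singleton_iff.mp he)).symm⟩
  have := hT.weight_le_of_exchange hij hne hnadj
    ((hT.2.1.isAcyclic.anti (deleteEdges_le _)).sup_edge_of_not_reachable hnr)
  exact this.not_gt hw

theorem IsMaxSpanningTree.eq_kruskalGraph
    (hinj : ∀ e f : Sym2 (Fin q), ¬ e.IsDiag → ¬ f.IsDiag → w e = w f → e = f)
    {T : SimpleGraph (Fin q)} (hT : IsMaxSpanningTree ⊤ w T) : T = kruskalGraph w := by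
  have := hT.2.1.connected.nonempty
  exact (maximal_isAcyclic_iff_isTree.mpr hT.2.1).eq_of_le (isAcyclic_kruskalGraph w hinj)
    (hT.le_kruskalGraph w)

theorem setOf_isJump_betti0
    (hinj : ∀ e f : Sym2 (Fin q), ¬ e.IsDiag → ¬ f.IsDiag → w e = w f → e = f) :
    {ε | IsJump (betti0 w) ε} = w '' (kruskalGraph w).edgeSet := by
  ext ε
  constructor
  · intro hε
    obtain ⟨e, he, rfl⟩ : ∃ e : Sym2 (Fin q), ¬ e.IsDiag ∧ w e = ε := by
      by_contra! h
      exact not_isJump_betti0_of_forall_ne w h hε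
    induction e using Sym2.ind with
    | h a b =>
    have hab : a ≠ b := by simpa using he
    exact ⟨s(a, b), ⟨hab, (isJump_betti0_weight_iff w hinj hab).mp hε⟩, rfl⟩
  · rintro ⟨e, he, rfl⟩
    induction e using Sym2.ind with
    | h a b => exact (isJump_betti0_weight_iff w hinj he.1).mpr he.2

end Threshold

theorem birth_set_eq_mst_general (q : ℕ) (w : Sym2 (Fin q) → ℝ)
    (hinj : ∀ e f : Sym2 (Fin q), ¬ e.IsDiag → ¬ f.IsDiag → w e = w f → e = f)
    (T : SimpleGraph (Fin q)) (hT : IsMaxSpanningTree ⊤ w T) :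
    (∀ i j : Fin q, i ≠ j →
      (IsJump (betti0 w) (w s(i, j)) ↔ s(i, j) ∈ T.edgeSet)) ∧
    {ε : ℝ | IsJump (betti0 w) ε}.ncard = q - 1 := by
  obtain rfl := hT.eq_kruskalGraph w hinj
  refine ⟨fun i j hij => (isJump_betti0_weight_iff w hinj hij).trans ⟨fun h => ⟨hij, h⟩, And.right⟩,
    ?_⟩
  have hinjOn : Set.InjOn w (kruskalGraph w).edgeSet := fun e he f hf =>
    hinj e f (not_isDiag_of_mem_edgeSet _ he) (not_isDiag_of_mem_edgeSet _ hf)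
  have hcard := (isTree_iff_connected_and_card.mp hT.2.1).2
  rw [Nat.card_fin, Nat.card_coe_set_eq] at hcard
  rw [setOf_isJump_betti0 w hinj, hinjOn.ncard_image]
  omega

/-- **Birth values are the maximum-spanning-tree edge weights.** For the complete
graph on `q ≥ 2` vertices with pairwise distinct positive edge weights and maximum
spanning tree `T`, an edge weight `w s(i,j)` is a jump point of the Betti-0 curve
iff the edge `{i,j}` lies in `T`; consequently the birth set has exactly `q − 1`
elements. -/
theorem birth_set_eq_mst (q : ℕ) (hq : 2 ≤ q) (w : Sym2 (Fin q) → ℝ)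
    (hpos : ∀ e : Sym2 (Fin q), ¬ e.IsDiag → 0 < w e)
    (hinj : ∀ e f : Sym2 (Fin q), ¬ e.IsDiag → ¬ f.IsDiag → w e = w f → e = f)
    (T : SimpleGraph (Fin q)) (hT : IsMaxSpanningTree ⊤ w T) :
    (∀ i j : Fin q, i ≠ j →
      (IsJump (betti0 w) (w s(i, j)) ↔ s(i, j) ∈ T.edgeSet)) ∧
    {ε : ℝ | IsJump (betti0 w) ε}.ncard = q - 1 :=
  birth_set_eq_mst_general q w hinj T hT
end

section
/- Let G be the complete graph on q ≥ 2 vertices with pairwise distinct positive edge weights and let T be its (unique) maximum spanning tree. For every ε ≥ 0, the number of connected components of the threshold graph G_ε satisfies β₀(ε) = 1 + #{edges of T with weight ≤ ε}. -/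
/-!
The threshold graph `G_ε` has the same connected components as the forest `T_ε` formed by the
edges of `T` heavier than `ε`. This is the cycle property of maximum spanning trees: if `xy` is
an edge with `ε < w(xy)`, every edge `e` on the tree path from `x` to `y` has `w(xy) ≤ w(e)`,
since otherwise exchanging `e` for `xy` would give a heavier spanning tree. Deleting an edge of
a forest raises the number of components by one, so deleting from `T` its `k` edges of weight
`≤ ε` leaves `1 + k` components.
-/

lemma finsum_mem_insert_diff_singleton_add {α M : Type*} [AddCommMonoid M] (f : α → M)
    {s : Set α} {a b : α} (hs : s.Finite) (ha : a ∉ s) (hb : b ∈ s) :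
    ∑ᶠ i ∈ insert a s \ {b}, f i + f b = f a + ∑ᶠ i ∈ s, f i := by
  have hab : a ≠ b := fun h ↦ ha (h ▸ hb)
  rw [← Set.insert_sdiff_singleton_comm hab,
    finsum_mem_insert f (fun h ↦ ha h.1) hs.sdiff, add_assoc, add_comm _ (f b),
    ← finsum_mem_insert f (by simp) hs.sdiff, Set.insert_sdiff_singleton,
    Set.insert_eq_of_mem hb]

namespace SimpleGraph

variable {V : Type*} {G H T : SimpleGraph V}

lemma Reachable.reachable_deleteEdges_or {u v : V} (h : G.Reachable u v) (a b : V) :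
    (G.deleteEdges {s(a, b)}).Reachable u v ∨ (G.deleteEdges {s(a, b)}).Reachable u a ∨
      (G.deleteEdges {s(a, b)}).Reachable u b := by
  by_contra! hnot
  obtain ⟨huv, hua, hub⟩ := hnot
  obtain ⟨p⟩ := h
  obtain ⟨d, -, hd, hd'⟩ := p.exists_boundary_dart {x | (G.deleteEdges {s(a, b)}).Reachable u x}
    Reachable.rfl huv
  simp only [Set.mem_ofPred_eq] at hd hd'
  by_cases hde : d.edge = s(a, b)
  · rcases Sym2.eq_iff.mp hde with ⟨h1, -⟩ | ⟨h1, -⟩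
    · exact hua (h1 ▸ hd)
    · exact hub (h1 ▸ hd)
  · refine hd' (hd.trans (Adj.reachable ?_))
    simp only [deleteEdges_adj, Set.mem_singleton_iff]
    exact ⟨d.adj, hde⟩

lemma card_connectedComponent_deleteEdges_of_isBridge [Finite V] {a b : V} (hab : G.Adj a b)
    (hb : G.IsBridge s(a, b)) :
    Nat.card (G.deleteEdges {s(a, b)}).ConnectedComponent = Nat.card G.ConnectedComponent + 1 := by
  set H := G.deleteEdges {s(a, b)}
  set φ : H.ConnectedComponent → G.ConnectedComponent :=
    ConnectedComponent.map (Hom.ofLE (deleteEdges_le _))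
  have hab' : H.connectedComponentMk a ≠ H.connectedComponentMk b :=
    fun h ↦ isBridge_iff.mp hb (ConnectedComponent.exact h)
  -- `φ` only identifies the components of `a` and `b`.
  have hinj : Set.InjOn φ {H.connectedComponentMk b}ᶜ := by
    intro c hc c' hc' hcc'
    induction c using ConnectedComponent.ind with | h u
    induction c' using ConnectedComponent.ind with | h v
    have hreach : G.Reachable u v := ConnectedComponent.exact hcc'
    have hsplit {x y : V} (hxy : G.Reachable x y)
        (hx : H.connectedComponentMk x ≠ H.connectedComponentMk b) :
        H.Reachable x y ∨ H.Reachable x a := by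
      rcases hxy.reachable_deleteEdges_or a b with h | h | h
      · exact .inl h
      · exact .inr h
      · exact absurd (ConnectedComponent.sound h) hx
    refine ConnectedComponent.sound ?_
    rcases hsplit hreach hc with h | hua
    · exact h
    rcases hsplit hreach.symm hc' with h | hva
    · exact h.symm
    · exact hua.trans hva.symm
  have hsurj : φ '' {H.connectedComponentMk b}ᶜ = Set.univ := by
    refine Set.eq_univ_of_forall (ConnectedComponent.ind fun v ↦ ?_)
    by_cases hv : H.connectedComponentMk v = H.connectedComponentMk b
    · refine ⟨H.connectedComponentMk a, hab', ConnectedComponent.sound ?_⟩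
      exact hab.reachable.trans ((ConnectedComponent.exact hv).mono (deleteEdges_le _)).symm
    · exact ⟨H.connectedComponentMk v, hv, rfl⟩
  rw [← Set.ncard_compl_add_ncard {H.connectedComponentMk b}, Set.ncard_singleton,
    ← hinj.ncard_image, hsurj, Set.ncard_univ]

lemma IsAcyclic.card_connectedComponent_deleteEdges [Finite V] (hG : G.IsAcyclic)
    {S : Set (Sym2 V)} (hS : S ⊆ G.edgeSet) :
    Nat.card (G.deleteEdges S).ConnectedComponent = Nat.card G.ConnectedComponent + S.ncard := by
  induction S, (Set.toFinite S) using Set.Finite.induction_on with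
  | empty => simp
  | @insert e S he hSfin ih =>
    have hSe : S ⊆ G.edgeSet := (Set.subset_insert e S).trans hS
    have he' : e ∈ (G.deleteEdges S).edgeSet := by
      rw [edgeSet_deleteEdges]
      exact ⟨hS (Set.mem_insert e S), he⟩
    have hbridge := isAcyclic_iff_forall_isBridge.mp (hG.anti (deleteEdges_le S)) he'
    rw [Set.ncard_insert_of_notMem he hSfin, ← add_assoc, ← ih hSe, ← Set.union_singleton,
      ← deleteEdges_deleteEdges]
    cases e with | h a b
    exact card_connectedComponent_deleteEdges_of_isBridge he' hbridge

lemma reachable_eq_of_le_of_forall_adj_reachable (hle : H ≤ G)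
    (hadj : ∀ u v, G.Adj u v → H.Reachable u v) : H.Reachable = G.Reachable := by
  refine le_antisymm (Reachable.mono' hle) fun u v huv ↦ ?_
  rw [reachable_eq_reflTransGen] at huv ⊢
  exact huv.lift' id fun a b hab ↦ reachable_eq_reflTransGen (G := H) ▸ hadj a b hab

lemma card_connectedComponent_eq_of_reachable_eq
    (h : G.Reachable = H.Reachable) :
    Nat.card G.ConnectedComponent = Nat.card H.ConnectedComponent := by
  unfold ConnectedComponent
  rw [h]

lemma Connected.card_connectedComponent (hG : G.Connected) :
    Nat.card G.ConnectedComponent = 1 :=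
  Nat.card_eq_one_iff_unique.mpr
    ⟨hG.preconnected.subsingleton_connectedComponent, hG.nonempty.map G.connectedComponentMk⟩

lemma edgeSet_sup_edge_deleteEdges {x y : V} (hne : x ≠ y) (e : Sym2 V) :
    ((T ⊔ edge x y).deleteEdges {e}).edgeSet = insert s(x, y) T.edgeSet \ {e} := by
  rw [edgeSet_deleteEdges, edgeSet_sup, edgeSet_edge_of_ne hne, Set.union_singleton]

lemma IsTree.sup_edge_deleteEdges [Finite V] (hT : T.IsTree) {x y : V} (hne : x ≠ y)
    (hnadj : ¬T.Adj x y) {p : T.Walk x y} (hp : p.IsPath) {e : Sym2 V} (he : e ∈ p.edges) :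
    ((T ⊔ edge x y).deleteEdges {e}).IsTree := by
  have hyx : (T ⊔ edge x y).Adj y x := by simp [edge_adj, hne.symm]
  have hcycle : (Walk.cons hyx (p.mapLe le_sup_left)).IsCycle := by
    rw [Walk.cons_isCycle_iff, Walk.edges_mapLe_eq_edges]
    exact ⟨hp.mapLe _, fun h ↦ hnadj (p.adj_of_mem_edges h).symm⟩
  have hnb : ¬(T ⊔ edge x y).IsBridge e := fun hb ↦
    hb.notMem_edges_of_isCycle hcycle (by simp [he])
  rw [isTree_iff_connected_and_card]
  refine ⟨?_, ?_⟩
  · cases e with | h c d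
    exact (hT.connected.mono le_sup_left).connected_delete_edge_of_not_isBridge hnb
  · rw [Nat.card_coe_set_eq, edgeSet_sup_edge_deleteEdges hne,
      Set.ncard_sdiff_singleton_of_mem (Set.mem_insert_of_mem _ (p.edges_subset_edgeSet he)),
      Set.ncard_insert_of_notMem (T.mem_edgeSet.not.mpr hnadj), Nat.add_sub_cancel,
      ← Nat.card_coe_set_eq]
    exact (isTree_iff_connected_and_card.mp hT).2

end SimpleGraph

open SimpleGraph

section MaxSpanningTree

variable {V : Type*} [Finite V] {G T : SimpleGraph V} {w : Sym2 V → ℝ}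

lemma IsMaxSpanningTree.weight_le_of_mem_edges (hT : IsMaxSpanningTree G w T) {x y : V}
    (hxy : G.Adj x y) (hnadj : ¬T.Adj x y) {p : T.Walk x y} (hp : p.IsPath) {e : Sym2 V}
    (he : e ∈ p.edges) : w s(x, y) ≤ w e := by
  obtain ⟨hTG, htree, hmax⟩ := hT
  have hle : (T ⊔ edge x y).deleteEdges {e} ≤ G :=
    (deleteEdges_le _).trans (sup_le hTG ((edge_le_iff G).mpr (.inr hxy)))
  have hsum := finsum_mem_insert_diff_singleton_add w (Set.toFinite T.edgeSet)
    (T.mem_edgeSet.not.mpr hnadj) (p.edges_subset_edgeSet he)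
  rw [← edgeSet_sup_edge_deleteEdges hxy.ne] at hsum
  have := hmax _ hle (htree.sup_edge_deleteEdges hxy.ne hnadj hp he)
  linarith

lemma IsMaxSpanningTree.reachable_deleteEdges_of_adj (hT : IsMaxSpanningTree G w T) {x y : V}
    (hxy : G.Adj x y) {S : Set (Sym2 V)} (hS : ∀ e ∈ S, w e < w s(x, y)) :
    (T.deleteEdges S).Reachable x y := by
  by_contra hxyS
  by_cases hTxy : T.Adj x y
  · exact hxyS ((deleteEdges_adj ..).mpr ⟨hTxy, fun h ↦ (hS _ h).false⟩).reachable
  obtain ⟨p, hp⟩ := (hT.2.1.connected.preconnected x y).exists_isPath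
  obtain ⟨e, heS, hep⟩ := p.exists_mem_edges_of_not_reachable_deleteEdges hxyS
  exact (hS e heS).not_ge (hT.weight_le_of_mem_edges hxy hTxy hp hep)

end MaxSpanningTree

theorem betti0_eq_one_add_mst_edges_general (q : ℕ) (w : Sym2 (Fin q) → ℝ)
    (T : SimpleGraph (Fin q)) (hT : IsMaxSpanningTree ⊤ w T) :
    ∀ ε : ℝ, 0 ≤ ε →
      betti0 w ε = 1 + {e : Sym2 (Fin q) | e ∈ T.edgeSet ∧ w e ≤ ε}.ncard := by
  rintro ε -
  set S := {e : Sym2 (Fin q) | e ∈ T.edgeSet ∧ w e ≤ ε}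
  have hreach : (T.deleteEdges S).Reachable = (thresholdGraph w ε).Reachable := by
    refine reachable_eq_of_le_of_forall_adj_reachable ?_ fun x y ⟨hxy, hε⟩ ↦
      hT.reachable_deleteEdges_of_adj hxy fun e he ↦ he.2.trans_lt hε
    intro x y hxy
    obtain ⟨hTxy, hxyS⟩ := (deleteEdges_adj ..).mp hxy
    exact ⟨hTxy.ne, lt_of_not_ge fun h ↦ hxyS ⟨hTxy, h⟩⟩
  rw [betti0, ← card_connectedComponent_eq_of_reachable_eq hreach,
    hT.2.1.isAcyclic.card_connectedComponent_deleteEdges fun e he ↦ he.1,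
    hT.2.1.connected.card_connectedComponent]

/-- **Betti-0 counts the maximum-spanning-tree edges below threshold.** For the
complete graph on `q ≥ 2` vertices with pairwise distinct positive edge weights and
maximum spanning tree `T`, for every `ε ≥ 0` the number of connected components of
the threshold graph satisfies `β₀(ε) = 1 + #{edges of T with weight ≤ ε}`. -/
theorem betti0_eq_one_add_mst_edges (q : ℕ) (hq : 2 ≤ q) (w : Sym2 (Fin q) → ℝ)
    (hpos : ∀ e : Sym2 (Fin q), ¬ e.IsDiag → 0 < w e)
    (hinj : ∀ e f : Sym2 (Fin q), ¬ e.IsDiag → ¬ f.IsDiag → w e = w f → e = f)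
    (T : SimpleGraph (Fin q)) (hT : IsMaxSpanningTree ⊤ w T) :
    ∀ ε : ℝ, 0 ≤ ε →
      betti0 w ε = 1 + {e : Sym2 (Fin q) | e ∈ T.edgeSet ∧ w e ≤ ε}.ncard :=
  betti0_eq_one_add_mst_edges_general q w T hT
end
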